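/- Let R, R' and S be TRSs over a signature Σ and let T be a set of ground terms. Let (A,[[·]],≥) be a monotone partial model for R ∪ R' ∪ S with T ⊆ L(A), such that for every rule ℓ→r ∈ R' and every assignment α : Var(ℓ) → A the interpretation [[ℓ]]_α is undefined. Then SN_T(R/S) implies SN_T((R ∪ R')/S). -/

import Mathlib

namespace LocalTerm

/-- Terms over a signature `F` with arities `ar` and variables `X`. -/
inductive Tm (F : Type) (ar : F → ℕ) (X : Type) : Type
  | var : X → Tm F ar X
  | app : (f : F) → (Fin (ar f) → Tm F ar X) → Tm F ar X

/-- Substitution. -/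
def subst {F : Type} {ar : F → ℕ} {X Y : Type} (σ : X → Tm F ar Y) :
    Tm F ar X → Tm F ar Y
  | .var x => σ x
  | .app f ts => .app f fun i => subst σ (ts i)

/-- One-step rewrite relation of a set `R` of rules (over variables `X`),
acting on terms over variables `V`: a rule instance inside a one-hole context. -/
inductive Rw {F : Type} {ar : F → ℕ} {X V : Type}
    (R : Set (Tm F ar X × Tm F ar X)) : Tm F ar V → Tm F ar V → Prop
  | rule {l r : Tm F ar X} (h : (l, r) ∈ R) (σ : X → Tm F ar V) :
      Rw R (subst σ l) (subst σ r)
  | ctxt {f : F} {ts : Fin (ar f) → Tm F ar V} (i : Fin (ar f)) {t' : Tm F ar V} :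
      Rw R (ts i) t' → Rw R (Tm.app f ts) (Tm.app f (Function.update ts i t'))

/-- The set of variables of a term. -/
def Vars {F : Type} {ar : F → ℕ} {X : Type} : Tm F ar X → Set X
  | .var x => {x}
  | .app _ ts => ⋃ i, Vars (ts i)

/-- `R` is a TRS: no left-hand side is a variable,
and all variables of a right-hand side occur in the left-hand side. -/
def IsTRS {F : Type} {ar : F → ℕ} {X : Type}
    (R : Set (Tm F ar X × Tm F ar X)) : Prop :=
  ∀ p ∈ R, (∀ x : X, p.1 ≠ Tm.var x) ∧ Vars p.2 ⊆ Vars p.1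

/-- A partial interpretation of the function symbols in a set `A`:
for every `n`-ary symbol a partial function `Aⁿ ⇀ A`. -/
abbrev Interp (F : Type) (ar : F → ℕ) (A : Type) : Type :=
  ∀ f : F, (Fin (ar f) → A) → Option A

/-- `Eval I α t a` : the (partial) interpretation of `t` under assignment `α`
is defined and equal to `a`. -/
inductive Eval {F : Type} {ar : F → ℕ} {X A : Type}
    (I : Interp F ar A) (α : X → A) : Tm F ar X → A → Prop
  | var (x : X) : Eval I α (Tm.var x) (α x)
  | app {f : F} {ts : Fin (ar f) → Tm F ar X} (as : Fin (ar f) → A) {a : A}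
      (hts : ∀ i, Eval I α (ts i) (as i)) (hI : I f as = some a) :
      Eval I α (Tm.app f ts) a

/-- A set `T` of ground terms is defined if the interpretation of
every `t ∈ T` is defined. -/
def DefinedOn {F : Type} {ar : F → ℕ} {A : Type}
    (I : Interp F ar A) (T : Set (Tm F ar Empty)) : Prop :=
  ∀ t ∈ T, ∃ a : A, Eval I Empty.elim t a

/-- `succ` is a partial model for `R`: whenever the interpretation of a
left-hand side is defined, the right-hand side is defined as well and the
interpretations are related by `succ`. -/
def PartialModel {F : Type} {ar : F → ℕ} {X A : Type}
    (I : Interp F ar A) (succ : A → A → Prop)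
    (R : Set (Tm F ar X × Tm F ar X)) : Prop :=
  ∀ p ∈ R, ∀ (α : X → A) (a : A), Eval I α p.1 a →
    ∃ b : A, Eval I α p.2 b ∧ succ a b

/-- A partial function is closed w.r.t. a relation. -/
def ClosedFn {A : Type} {n : ℕ} (g : (Fin n → A) → Option A)
    (r : A → A → Prop) : Prop :=
  ∀ (v : Fin n → A) (i : Fin n) (b : A), r (v i) b → (g v).isSome →
    (g (Function.update v i b)).isSome

/-- A partial function is monotone w.r.t. a relation. -/
def MonoFn {A : Type} {n : ℕ} (g : (Fin n → A) → Option A)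
    (r : A → A → Prop) : Prop :=
  ∀ (v : Fin n → A) (i : Fin n) (b : A) (x y : A), r (v i) b →
    g v = some x → g (Function.update v i b) = some y → r x y

/-- `(A, I, r)` is a monotone partial algebra: every interpretation is
closed and monotone with respect to `r`. -/
def MonoAlg {F : Type} {ar : F → ℕ} {A : Type}
    (I : Interp F ar A) (r : A → A → Prop) : Prop :=
  ∀ f : F, ClosedFn (I f) r ∧ MonoFn (I f) r

/-- Well-foundedness: no infinite descending sequence. -/
def WFrel {A : Type} (r : A → A → Prop) : Prop :=
  ¬ ∃ f : ℕ → A, ∀ n : ℕ, r (f n) (f (n + 1))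

/-- `r` is terminating on `T`: no element of `T` starts an infinite `r`-sequence. -/
def SNon {B : Type} (r : B → B → Prop) (T : Set B) : Prop :=
  ∀ t ∈ T, ¬ ∃ f : ℕ → B, f 0 = t ∧ ∀ n : ℕ, r (f n) (f (n + 1))

/-- Relative termination on `T`: no element of `T` starts an infinite
`(r ∪ s)`-sequence containing infinitely many `r`-steps. -/
def SNrelOn {B : Type} (r s : B → B → Prop) (T : Set B) : Prop :=
  ∀ t ∈ T, ¬ ∃ f : ℕ → B, f 0 = t ∧
    (∀ n : ℕ, r (f n) (f (n + 1)) ∨ s (f n) (f (n + 1))) ∧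
    (∀ m : ℕ, ∃ n : ℕ, m ≤ n ∧ r (f n) (f (n + 1)))

/-- Relative termination (on everything). -/
def SNrel {B : Type} (r s : B → B → Prop) : Prop := SNrelOn r s Set.univ


/-!
Interpretations are defined on all of `T` and stay defined along `R`- and `S`-steps, since a
monotone partial model is closed under rewriting. A term with defined interpretation contains no
instance of an `R'`-left-hand side, so along any `(R ∪ R')/S`-sequence from `T` every `R ∪ R'`-step
is an `R`-step, and the sequence is an `R/S`-sequence.
-/

section Evaluation

variable {F : Type} {ar : F → ℕ} {X V A : Type} {I : Interp F ar A}

theorem Eval.unique {α : X → A} {t : Tm F ar X} {a b : A}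
    (ha : Eval I α t a) (hb : Eval I α t b) : a = b := by
  induction ha generalizing b with
  | var x => cases hb; rfl
  | app as _ hI ih =>
    cases hb with
    | app as' hts' hI' =>
      obtain rfl : as = as' := funext fun i => ih i (hts' i)
      exact Option.some.inj (hI.symm.trans hI')

theorem Eval.exists_of_subst {β : V → A} {σ : X → Tm F ar V} {t : Tm F ar X} {a : A}
    (h : Eval I β (subst σ t) a) {x : X} (hx : x ∈ Vars t) : ∃ b, Eval I β (σ x) b := by
  induction t generalizing a with
  | var y => cases hx; exact ⟨a, h⟩
  | app f ts ih =>
    obtain ⟨i, hi⟩ := Set.mem_iUnion.mp hx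
    cases h with
    | app as hts _ => exact ih i (hts i) hi

theorem eval_subst_iff {β : V → A} {α : X → A} {σ : X → Tm F ar V} {t : Tm F ar X} {a : A}
    (hσ : ∀ x ∈ Vars t, Eval I β (σ x) (α x)) :
    Eval I β (subst σ t) a ↔ Eval I α t a := by
  induction t generalizing a with
  | var x =>
    refine ⟨fun h => ?_, fun h => ?_⟩
    · rw [← (hσ x rfl).unique h]; exact Eval.var x
    · cases h; exact hσ x rfl
  | app f ts ih =>
    have hσi : ∀ i, ∀ x ∈ Vars (ts i), Eval I β (σ x) (α x) :=
      fun i x hx => hσ x (Set.mem_iUnion.mpr ⟨i, hx⟩)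
    refine ⟨fun h => ?_, fun h => ?_⟩
    · cases h with
      | app as hts hI => exact Eval.app as (fun i => (ih i (hσi i)).mp (hts i)) hI
    · cases h with
      | app as hts hI => exact Eval.app as (fun i => (ih i (hσi i)).mpr (hts i)) hI

theorem Eval.exists_assignment_of_subst {β : V → A} {σ : X → Tm F ar V} {t : Tm F ar X}
    {a : A} (h : Eval I β (subst σ t) a) :
    ∃ α : X → A, (∀ x ∈ Vars t, Eval I β (σ x) (α x)) ∧ Eval I α t a := by
  classical
  let α : X → A := fun x => if hx : x ∈ Vars t then (h.exists_of_subst hx).choose else a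
  have hσ : ∀ x ∈ Vars t, Eval I β (σ x) (α x) := fun x hx => by
    simpa only [α, dif_pos hx] using (h.exists_of_subst hx).choose_spec
  exact ⟨α, hσ, (eval_subst_iff hσ).mp h⟩

end Evaluation

section Rewriting

variable {F : Type} {ar : F → ℕ} {X V A : Type} {I : Interp F ar A}

theorem Rw.or_of_union {P Q : Set (Tm F ar X × Tm F ar X)} {t t' : Tm F ar V}
    (h : Rw (P ∪ Q) t t') : Rw P t t' ∨ Rw Q t t' := by
  induction h with
  | rule h σ => exact h.imp (Rw.rule · σ) (Rw.rule · σ)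
  | ctxt i _ ih => exact ih.imp (Rw.ctxt i) (Rw.ctxt i)

theorem PartialModel.mono {ge : A → A → Prop} {P Q : Set (Tm F ar X × Tm F ar X)}
    (h : PartialModel I ge Q) (hPQ : P ⊆ Q) : PartialModel I ge P :=
  fun p hp => h p (hPQ hp)

theorem not_rw_of_eval_of_lhs_undefined {Q : Set (Tm F ar X × Tm F ar X)}
    (hQ : ∀ p ∈ Q, ∀ (α : X → A) (a : A), ¬ Eval I α p.1 a)
    {β : V → A} {t t' : Tm F ar V} {a : A} (ht : Eval I β t a) : ¬ Rw Q t t' := by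
  intro hrw
  induction hrw generalizing a with
  | rule hmem σ =>
    obtain ⟨α, -, hl⟩ := ht.exists_assignment_of_subst
    exact hQ _ hmem α a hl
  | ctxt i _ ih =>
    cases ht with
    | app as hts _ => exact ih (hts i)

/-- At the root this is the partial-model property; below the root, closedness keeps the
context defined and monotonicity carries `ge` upwards. -/
theorem PartialModel.exists_eval_of_rw {ge : A → A → Prop} {Q : Set (Tm F ar X × Tm F ar X)}
    (hmono : MonoAlg I ge) (hQ : IsTRS Q) (hpm : PartialModel I ge Q)
    {β : V → A} {t t' : Tm F ar V} (hrw : Rw Q t t') {a : A} (ht : Eval I β t a) :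
    ∃ b, Eval I β t' b ∧ ge a b := by
  induction hrw generalizing a with
  | @rule l r hmem σ =>
    obtain ⟨α, hσ, hl⟩ := ht.exists_assignment_of_subst
    obtain ⟨b, hr, hab⟩ := hpm _ hmem α a hl
    exact ⟨b, (eval_subst_iff fun x hx => hσ x ((hQ _ hmem).2 hx)).mpr hr, hab⟩
  | @ctxt f ts i t' _ ih =>
    cases ht with
    | app as hts hI =>
      obtain ⟨b, hb, hab⟩ := ih (hts i)
      obtain ⟨c, hc⟩ := Option.isSome_iff_exists.mp
        ((hmono f).1 as i b hab (by rw [hI]; rfl))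
      refine ⟨c, Eval.app (Function.update as i b) (fun j => ?_) hc,
        (hmono f).2 as i b _ _ hab hI hc⟩
      rcases eq_or_ne j i with rfl | hne
      · simpa using hb
      · simpa [Function.update_of_ne hne] using hts j

end Rewriting

theorem SNrelOn.of_le_on_invariant {B : Type} {r r₁ s : B → B → Prop} {T P : Set B}
    (hTP : T ⊆ P) (hr₁ : ∀ b ∈ P, ∀ c, r₁ b c → r b c)
    (hP : ∀ b ∈ P, ∀ c, r b c ∨ s b c → c ∈ P) (h : SNrelOn r s T) :
    SNrelOn r₁ s T := by
  rintro t ht ⟨f, hf0, hsteps, hinf⟩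
  have hstep : ∀ n, f n ∈ P → r (f n) (f (n + 1)) ∨ s (f n) (f (n + 1)) :=
    fun n hn => (hsteps n).imp_left (hr₁ _ hn _)
  have hfP : ∀ n, f n ∈ P := fun n => by
    induction n with
    | zero => exact hf0 ▸ hTP ht
    | succ n ih => exact hP _ ih _ (hstep n ih)
  refine h t ht ⟨f, hf0, fun n => hstep n (hfP n), fun m => ?_⟩
  obtain ⟨n, hmn, hn⟩ := hinf m
  exact ⟨n, hmn, hr₁ _ (hfP n) _ hn⟩

theorem remove_rules_with_undefined_lhs_general
    {F X : Type} {ar : F → ℕ}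
    (R R' S : Set (Tm F ar X × Tm F ar X))
    (hR : IsTRS R) (hS : IsTRS S)
    (T : Set (Tm F ar Empty))
    {A : Type} (I : Interp F ar A) (ge : A → A → Prop)
    (hmono : MonoAlg I ge)
    (hpm : PartialModel I ge (R ∪ R' ∪ S))
    (hT : DefinedOn I T)
    (hundef : ∀ p ∈ R', ∀ (α : X → A) (a : A), ¬ Eval I α p.1 a)
    (hsn : SNrelOn (Rw R) (Rw S) T) :
    SNrelOn (Rw (R ∪ R')) (Rw S) T := by
  have hpmR : PartialModel I ge R := hpm.mono fun _ h => Or.inl (Or.inl h)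
  have hpmS : PartialModel I ge S := hpm.mono fun _ h => Or.inr h
  refine hsn.of_le_on_invariant (P := {t | ∃ a, Eval I Empty.elim t a}) hT ?_ ?_
  · rintro t ⟨a, ha⟩ t' hrw
    exact hrw.or_of_union.resolve_right (not_rw_of_eval_of_lhs_undefined hundef ha)
  · rintro t ⟨a, ha⟩ t' (hrw | hrw)
    · obtain ⟨b, hb, -⟩ := hpmR.exists_eval_of_rw hmono hR hrw ha
      exact ⟨b, hb⟩
    · obtain ⟨b, hb, -⟩ := hpmS.exists_eval_of_rw hmono hS hrw ha
      exact ⟨b, hb⟩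

/-- If `(A, I, ge)` is a monotone partial model for
`R ∪ R' ∪ S` with `T ⊆ L(A)` and all left-hand sides of `R'` are undefined,
then `SN_T(R/S)` implies `SN_T((R ∪ R')/S)`. -/
theorem remove_rules_with_undefined_lhs
    {F X : Type} {ar : F → ℕ}
    (R R' S : Set (Tm F ar X × Tm F ar X))
    (hR : IsTRS R) (hR' : IsTRS R') (hS : IsTRS S)
    (T : Set (Tm F ar Empty))
    {A : Type} [Nonempty A] (I : Interp F ar A) (ge : A → A → Prop)
    (hmono : MonoAlg I ge)
    (hpm : PartialModel I ge (R ∪ R' ∪ S))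
    (hT : DefinedOn I T)
    (hundef : ∀ p ∈ R', ∀ (α : X → A) (a : A), ¬ Eval I α p.1 a)
    (hsn : SNrelOn (Rw R) (Rw S) T) :
    SNrelOn (Rw (R ∪ R')) (Rw S) T :=
  remove_rules_with_undefined_lhs_general R R' S hR hS T I ge hmono hpm hT hundef hsn

end LocalTerm
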